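/- The complex vector space W_p with basis {d_n, e_n : n ∈ ℤ} and bilinear bracket defined on basis elements by [d_m, d_n] = (m-n)(4 d_{m+n+1} + d_{m+n+2}), [d_m, e_n] = (4m-4n+2) e_{m+n+1} + (m-n+1) e_{m+n+2}, [e_m, e_n] = (m-n) d_{m+n}, is a Lie algebra (i.e., the bracket is antisymmetric and satisfies the Jacobi identity). -/

import Mathlib

/-- The underlying space of the three-point Witt algebra W_p: the free ℂ-vector
space on the basis {d_n : n ∈ ℤ} ∪ {e_n : n ∈ ℤ}, with `Sum.inl n` ↦ d_n and
`Sum.inr n` ↦ e_n. -/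
abbrev Wp : Type := (ℤ ⊕ ℤ) →₀ ℂ

noncomputable def db (n : ℤ) : Wp := Finsupp.single (Sum.inl n) 1
noncomputable def eb (n : ℤ) : Wp := Finsupp.single (Sum.inr n) 1

/-- The bracket on basis elements:
[d_m, d_n] = (m-n)(4 d_{m+n+1} + d_{m+n+2}),
[d_m, e_n] = (4m-4n+2) e_{m+n+1} + (m-n+1) e_{m+n+2},
[e_m, e_n] = (m-n) d_{m+n}, and [e_m, d_n] = -[d_n, e_m]. -/
noncomputable def br0 : (ℤ ⊕ ℤ) → (ℤ ⊕ ℤ) → Wp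
  | .inl m, .inl n => ((m : ℂ) - n) • ((4 : ℂ) • db (m + n + 1) + db (m + n + 2))
  | .inl m, .inr n => (4 * (m : ℂ) - 4 * n + 2) • eb (m + n + 1) +
      ((m : ℂ) - n + 1) • eb (m + n + 2)
  | .inr m, .inl n => -((4 * (n : ℂ) - 4 * m + 2) • eb (n + m + 1) +
      ((n : ℂ) - m + 1) • eb (n + m + 2))
  | .inr m, .inr n => ((m : ℂ) - n) • db (m + n)

/-- The bilinear extension of `br0` to all of W_p. -/
noncomputable def wbr (x y : Wp) : Wp :=
  x.sum fun i a => y.sum fun j b => (a * b) • br0 i j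

/-!
Both identities are multilinear, so it suffices to check them on basis vectors. For
antisymmetry this is the formula for `br0`. For the Jacobi identity, the Jacobiator is
invariant under cyclic permutation and linear in its first argument, so its vanishing on
basis triples spreads to arbitrary arguments one slot at a time; on basis triples it is,
in each of the eight cases `d`/`e`, a polynomial identity in the three indices.
-/

section BilinearBracket

variable {ι R M : Type*} [CommSemiring R] [AddCommGroup M] [Module R M]
  (B : M →ₗ[R] M →ₗ[R] M) (b : Module.Basis ι R M)

theorem LinearMap.apply_eq_neg_apply_of_basis (h : ∀ i j, B (b i) (b j) = -B (b j) (b i))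
    (x y : M) : B x y = -B y x := by
  have hB : B = -B.flip := LinearMap.ext_basis b b h
  exact congr($hB x y)

def LinearMap.jacobiator (x y z : M) : M := B x (B y z) + B y (B z x) + B z (B x y)

theorem LinearMap.jacobiator_cycle (x y z : M) :
    B.jacobiator x y z = B.jacobiator y z x := by
  unfold LinearMap.jacobiator; abel

theorem LinearMap.jacobiator_eq_zero_of_basis_left {y z : M}
    (h : ∀ i, B.jacobiator (b i) y z = 0) (x : M) : B.jacobiator x y z = 0 := by
  have hJ : B.flip (B y z) + B y ∘ₗ B z + B z ∘ₗ B.flip y = 0 := b.ext h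
  exact congr($hJ x)

theorem LinearMap.jacobiator_eq_zero_of_basis
    (h : ∀ i j k, B.jacobiator (b i) (b j) (b k) = 0) (x y z : M) :
    B.jacobiator x y z = 0 := by
  have h₁ (j k : ι) (x : M) : B.jacobiator x (b j) (b k) = 0 :=
    B.jacobiator_eq_zero_of_basis_left b (fun i ↦ h i j k) x
  have h₂ (k : ι) (x y : M) : B.jacobiator x (b k) y = 0 :=
    B.jacobiator_eq_zero_of_basis_left b
      (fun j ↦ (B.jacobiator_cycle _ _ _).symm.trans (h₁ j k y)) x
  exact B.jacobiator_eq_zero_of_basis_left b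
    (fun k ↦ (B.jacobiator_cycle _ _ _).trans ((B.jacobiator_cycle _ _ _).trans (h₂ k z y))) x

end BilinearBracket

noncomputable def wbrBilin : Wp →ₗ[ℂ] Wp →ₗ[ℂ] Wp :=
  Finsupp.basisSingleOne.constr ℂ fun i ↦ Finsupp.basisSingleOne.constr ℂ (br0 i)

theorem wbrBilin_apply (x y : Wp) : wbrBilin x y = wbr x y := by
  simp [wbrBilin, wbr, Module.Basis.constr_apply, Finsupp.smul_sum, smul_smul]

theorem wbrBilin_single_single (i j : ℤ ⊕ ℤ) :
    wbrBilin (Finsupp.single i 1) (Finsupp.single j 1) = br0 i j := by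
  change wbrBilin (Finsupp.basisSingleOne i) (Finsupp.basisSingleOne j) = _
  simp only [wbrBilin, Module.Basis.constr_basis]

-- `ring_nf` normalises the indices (`m + n + 1` vs `n + m + 1`), so that `module` sees
-- equal basis vectors as equal atoms.
theorem br0_skew (i j : ℤ ⊕ ℤ) : br0 i j = -br0 j i := by
  rcases i with m | m <;> rcases j with n | n <;> simp only [br0, neg_neg] <;> ring_nf <;> module

theorem wbrBilin_jacobiator_single (i j k : ℤ ⊕ ℤ) :
    wbrBilin.jacobiator (Finsupp.single i 1) (Finsupp.single j 1) (Finsupp.single k 1) = 0 := by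
  rcases i with m | m <;> rcases j with n | n <;> rcases k with p | p <;>
    simp only [LinearMap.jacobiator, wbrBilin_single_single, br0, db, eb, map_add, map_smul,
      map_neg] <;>
    ring_nf <;> module

/-- W_p is a Lie algebra: the bracket is antisymmetric and satisfies the
Jacobi identity. -/
theorem Wp_isLieAlgebra :
    (∀ x y : Wp, wbr x y = -wbr y x) ∧
    (∀ x y z : Wp, wbr x (wbr y z) + wbr y (wbr z x) + wbr z (wbr x y) = 0) := by
  have hskew := wbrBilin.apply_eq_neg_apply_of_basis Finsupp.basisSingleOne
    (by simpa only [Finsupp.coe_basisSingleOne, wbrBilin_single_single] using br0_skew)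
  have hjacobi := wbrBilin.jacobiator_eq_zero_of_basis Finsupp.basisSingleOne
    (by simpa only [Finsupp.coe_basisSingleOne] using wbrBilin_jacobiator_single)
  simp only [LinearMap.jacobiator, wbrBilin_apply] at hskew hjacobi
  exact ⟨hskew, hjacobi⟩
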